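/- Let n ≥ 1 and H ∈ (0, 1/2). Then there exists a finite set A_n of multi-indices α ∈ {0,1,2}ⁿ with cardinality 2^{n-1}, each satisfying α₁ ∈ {1,2}, αₙ ∈ {0,1} and ∑_{j=1}^{n} α_j = n, such that for all real numbers η₁, …, ηₙ (with the convention η₀ = 0): ∏_{j=1}^{n} |η_j − η_{j-1}|^{1-2H} ≤ ∑_{α ∈ A_n} ∏_{j=1}^{n} |η_j|^{(1-2H) α_j}. -/
import Mathlib

open Finset

private lemma real_rpow_add_le {p : ℝ} (hp : 0 ≤ p) (hp1 : p ≤ 1) (a b : ℝ)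
    (ha : 0 ≤ a) (hb : 0 ≤ b) : (a + b) ^ p ≤ a ^ p + b ^ p := by
  have h := NNReal.rpow_add_le_add_rpow a.toNNReal b.toNNReal hp hp1
  have h2 := NNReal.coe_le_coe.2 h
  push_cast at h2
  rwa [Real.coe_toNNReal a ha, Real.coe_toNNReal b hb] at h2

private lemma subadd_rpow {γ : ℝ} (h0 : 0 < γ) (h1 : γ ≤ 1) (a b : ℝ) :
    |a - b| ^ γ ≤ |a| ^ γ + |b| ^ γ := by
  calc |a - b| ^ γ ≤ (|a| + |b|) ^ γ :=
        Real.rpow_le_rpow (abs_nonneg _) (abs_sub _ _) h0.le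
    _ ≤ |a| ^ γ + |b| ^ γ :=
        real_rpow_add_le h0.le h1 _ _ (abs_nonneg a) (abs_nonneg b)

/-- injectivity: the exponent vector determines the subset -/
private lemma F_inj {n : ℕ} {T T' : Finset ℕ} (hT : T ⊆ Finset.Ico 1 n)
    (hT' : T' ⊆ Finset.Ico 1 n)
    (h : ∀ i, i < n →
      ((if i ∈ T then 0 else 1) + (if i + 1 ∈ T then 1 else 0) : ℕ) =
      (if i ∈ T' then 0 else 1) + (if i + 1 ∈ T' then 1 else 0)) : T = T' := by
  have key : ∀ m t, n - m ≤ t → (t ∈ T ↔ t ∈ T') := by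
    intro m
    induction m with
    | zero =>
      intro t ht
      constructor <;> intro hm
      · exact absurd (mem_Ico.1 (hT hm)).2 (by omega)
      · exact absurd (mem_Ico.1 (hT' hm)).2 (by omega)
    | succ m ih =>
      intro t ht
      by_cases hge : n - m ≤ t
      · exact ih t hge
      · by_cases h0 : t = 0
        · subst h0
          constructor <;> intro hm
          · exact absurd (mem_Ico.1 (hT hm)).1 (by omega)
          · exact absurd (mem_Ico.1 (hT' hm)).1 (by omega)
        · have htn : t < n := by omega
          have hsucc : (t + 1 ∈ T) ↔ (t + 1 ∈ T') := ih (t + 1) (by omega)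
          have heq := h t htn
          have e2 : (if t + 1 ∈ T then 1 else 0 : ℕ) = (if t + 1 ∈ T' then 1 else 0) := by
            by_cases h3 : t + 1 ∈ T
            · rw [if_pos h3, if_pos (hsucc.1 h3)]
            · rw [if_neg h3, if_neg (fun hh => h3 (hsucc.2 hh))]
          rw [e2] at heq
          have e1 := Nat.add_right_cancel heq
          by_cases h1 : t ∈ T <;> by_cases h2 : t ∈ T' <;>
            simp [h1, h2] at e1 ⊢
  ext t
  exact key n t (by omega)

/-- reindexing of the successor-membership filter -/
private lemma filter_succ_eq {n : ℕ} {T : Finset ℕ} (hT : T ⊆ Finset.Ico 1 n) :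
    (Finset.range n).filter (fun i => i + 1 ∈ T) = T.image (· - 1) := by
  ext a
  simp only [mem_filter, mem_range, mem_image]
  constructor
  · rintro ⟨ha, hin⟩
    exact ⟨a + 1, hin, by omega⟩
  · rintro ⟨t, ht, rfl⟩
    have hb := mem_Ico.1 (hT ht)
    refine ⟨by omega, ?_⟩
    have he : t - 1 + 1 = t := by omega
    rw [he]; exact ht

theorem stmt_13 (n : ℕ) (hn : 1 ≤ n) (H : ℝ) (hH : H ∈ Set.Ioo (0 : ℝ) (1 / 2)) :
    ∃ A : Finset (Fin n → ℕ),
      A.card = 2 ^ (n - 1) ∧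
      (∀ α ∈ A,
        (∀ j, α j ≤ 2) ∧
        α ⟨0, by omega⟩ ∈ ({1, 2} : Set ℕ) ∧
        α ⟨n - 1, by omega⟩ ∈ ({0, 1} : Set ℕ) ∧
        (∑ j, α j) = n) ∧
      ∀ η : Fin n → ℝ,
        (∏ j : Fin n,
            |η j - (if h : 1 ≤ (j : ℕ) then
              η ⟨(j : ℕ) - 1, by have := j.isLt; omega⟩ else 0)| ^ (1 - 2 * H)) ≤
          ∑ α ∈ A, ∏ j : Fin n, |η j| ^ ((1 - 2 * H) * α j) := by
  obtain ⟨hH0, hH2⟩ := hH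
  set γ : ℝ := 1 - 2 * H with hγdef
  have hγ0 : 0 < γ := by simp only [hγdef]; linarith
  have hγ1 : γ ≤ 1 := by simp only [hγdef]; linarith
  classical
  set F : Finset ℕ → Fin n → ℕ :=
    fun T j => (if (j : ℕ) ∈ T then 0 else 1) + (if (j : ℕ) + 1 ∈ T then 1 else 0) with hF
  set S : Finset (Finset ℕ) := (Finset.Ico 1 n).powerset with hS
  have hinj : Set.InjOn F S := by
    intro T hTmem T' hTmem' hEq
    have hT : T ⊆ Finset.Ico 1 n := mem_powerset.1 hTmem
    have hT' : T' ⊆ Finset.Ico 1 n := mem_powerset.1 hTmem'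
    refine F_inj hT hT' (fun i hi => ?_)
    have := congrFun hEq ⟨i, hi⟩
    simpa [hF] using this
  refine ⟨S.image F, ?_, ?_, ?_⟩
  · rw [Finset.card_image_of_injOn hinj, hS, card_powerset, Nat.card_Ico]
  · intro α hα
    obtain ⟨T, hTmem, rfl⟩ := Finset.mem_image.1 hα
    have hT : T ⊆ Finset.Ico 1 n := mem_powerset.1 hTmem
    have hTsub : ∀ t ∈ T, 1 ≤ t ∧ t < n := fun t ht => mem_Ico.1 (hT ht)
    refine ⟨?_, ?_, ?_, ?_⟩
    · intro j
      show ((if (j : ℕ) ∈ T then 0 else 1) + (if (j : ℕ) + 1 ∈ T then 1 else 0) : ℕ) ≤ 2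
      split <;> split <;> omega
    · have h0 : (0 : ℕ) ∉ T := fun h => by have := hTsub 0 h; omega
      show ((if (0 : ℕ) ∈ T then 0 else 1) + (if 0 + 1 ∈ T then 1 else 0) : ℕ) ∈
        ({1, 2} : Set ℕ)
      rw [if_neg h0]
      simp only [Set.mem_insert_iff, Set.mem_singleton_iff]
      split <;> omega
    · have hn' : (n - 1) + 1 ∉ T := by
        intro h; have := hTsub _ h; omega
      show ((if (n - 1 : ℕ) ∈ T then 0 else 1) + (if (n - 1) + 1 ∈ T then 1 else 0) : ℕ) ∈
        ({0, 1} : Set ℕ)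
      rw [if_neg hn']
      simp only [Set.mem_insert_iff, Set.mem_singleton_iff]
      split <;> omega
    · -- sum of exponents is n
      have hTr : T ⊆ Finset.range n := fun t ht => by
        have := hTsub t ht; simp only [mem_range]; omega
      have hTcard : T.card ≤ n - 1 := by
        have := Finset.card_le_card hT
        simpa [Nat.card_Ico] using this
      have hrange : (∑ j : Fin n, F T j) =
          ∑ i ∈ Finset.range n,
            ((if i ∈ T then 0 else 1) + (if i + 1 ∈ T then 1 else 0)) := by
        rw [← Fin.sum_univ_eq_sum_range
          (fun i => ((if i ∈ T then 0 else 1) + (if i + 1 ∈ T then 1 else 0)))]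
      rw [hrange, Finset.sum_add_distrib]
      have h1 : (∑ i ∈ Finset.range n, (if i ∈ T then 0 else 1)) = n - T.card := by
        have e : ∀ i ∈ Finset.range n,
            (if i ∈ T then 0 else 1) = (if i ∉ T then 1 else 0 : ℕ) := by
          intro i _; by_cases h : i ∈ T <;> simp [h]
        rw [Finset.sum_congr rfl e, ← Finset.card_filter, Finset.filter_not,
          Finset.filter_mem_eq_inter, Finset.inter_eq_right.2 hTr,
          Finset.card_sdiff_of_subset hTr, Finset.card_range]
      have hinj2 : Set.InjOn (· - 1) (T : Set ℕ) := by
        intro a ha b hb hab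
        simp only [Finset.mem_coe] at ha hb
        have := hTsub a ha; have := hTsub b hb
        simp only at hab
        omega
      have h2 : (∑ i ∈ Finset.range n, (if i + 1 ∈ T then 1 else 0)) = T.card := by
        rw [← Finset.card_filter, filter_succ_eq hT,
          Finset.card_image_of_injOn hinj2]
      rw [h1, h2]
      omega
  · -- the inequality
    intro η
    set x : ℕ → ℝ := fun i => if h : i < n then η ⟨i, h⟩ else 0 with hx
    set pv : ℕ → ℝ := fun i => if i = 0 then 0 else |x (i - 1)| ^ γ with hpv
    set g : ℕ → ℝ := fun i => |x i| ^ γ with hg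
    have hLHS : (∏ j : Fin n,
        |η j - (if h : 1 ≤ (j : ℕ) then
          η ⟨(j : ℕ) - 1, by have := j.isLt; omega⟩ else 0)| ^ γ) =
        ∏ i ∈ Finset.range n,
          |x i - (if 1 ≤ i then x (i - 1) else 0)| ^ γ := by
      rw [← Fin.prod_univ_eq_prod_range
        (fun i => |x i - (if 1 ≤ i then x (i - 1) else 0)| ^ γ)]
      refine Finset.prod_congr rfl (fun j _ => ?_)
      have hj := j.isLt
      by_cases h1 : 1 ≤ (j : ℕ)
      · have hj1 : (j : ℕ) - 1 < n := by omega
        simp [hx, hj, h1, hj1, Fin.eta]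
      · simp [hx, hj, h1]
    rw [hLHS]
    have step1 : (∏ i ∈ Finset.range n, |x i - (if 1 ≤ i then x (i - 1) else 0)| ^ γ)
        ≤ ∏ i ∈ Finset.range n, (pv i + g i) := by
      refine Finset.prod_le_prod (fun i _ => Real.rpow_nonneg (abs_nonneg _) _)
        (fun i _ => ?_)
      by_cases h0 : i = 0
      · subst h0
        simp only [hpv, hg, if_pos rfl, if_neg (by omega : ¬ (1:ℕ) ≤ 0)]
        simp
      · have h1 : 1 ≤ i := by omega
        simp only [hpv, hg, if_neg h0, if_pos h1]
        calc |x i - x (i - 1)| ^ γ ≤ |x i| ^ γ + |x (i - 1)| ^ γ :=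
              subadd_rpow hγ0 hγ1 _ _
          _ = |x (i - 1)| ^ γ + |x i| ^ γ := by ring
    refine step1.trans ?_
    rw [Finset.prod_add]
    have hsub : S ⊆ (Finset.range n).powerset := by
      intro T hTm
      rw [hS, Finset.mem_powerset] at hTm
      rw [Finset.mem_powerset]
      intro t ht
      have := mem_Ico.1 (hTm ht)
      simp only [mem_range]; omega
    have hvan : ∀ T ∈ (Finset.range n).powerset, T ∉ S →
        (∏ i ∈ T, pv i) * ∏ i ∈ Finset.range n \ T, g i = 0 := by
      intro T hTm hTnot
      have hTr : T ⊆ Finset.range n := Finset.mem_powerset.1 hTm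
      have h0T : 0 ∈ T := by
        by_contra h0
        apply hTnot
        rw [hS, Finset.mem_powerset]
        intro t ht
        have htn : t < n := Finset.mem_range.1 (hTr ht)
        have ht0 : t ≠ 0 := fun h => h0 (h ▸ ht)
        rw [mem_Ico]; omega
      have : (∏ i ∈ T, pv i) = 0 := Finset.prod_eq_zero h0T (by simp [hpv])
      rw [this, zero_mul]
    rw [← Finset.sum_subset hsub hvan]
    rw [Finset.sum_image (fun a ha b hb => hinj (by simpa using ha) (by simpa using hb))]
    refine le_of_eq (Finset.sum_congr rfl (fun T hTm => ?_))
    have hT : T ⊆ Finset.Ico 1 n := mem_powerset.1 hTm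
    have hTsub : ∀ t ∈ T, 1 ≤ t ∧ t < n := fun t ht => mem_Ico.1 (hT ht)
    have hRT : (∏ j : Fin n, |η j| ^ (γ * (F T j : ℝ))) =
        ∏ i ∈ Finset.range n,
          ((if i ∈ T then 1 else |x i| ^ γ) * (if i + 1 ∈ T then |x i| ^ γ else 1)) := by
      rw [← Fin.prod_univ_eq_prod_range
        (fun i => (if i ∈ T then 1 else |x i| ^ γ) * (if i + 1 ∈ T then |x i| ^ γ else 1))]
      refine Finset.prod_congr rfl (fun j _ => ?_)
      have hj := j.isLt
      have hxj : x (j : ℕ) = η j := by simp [hx, hj]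
      rw [hxj]
      show |η j| ^ (γ * (((if (j : ℕ) ∈ T then 0 else 1) +
          (if (j : ℕ) + 1 ∈ T then 1 else 0) : ℕ) : ℝ)) = _
      by_cases h1 : (j : ℕ) ∈ T <;> by_cases h2 : (j : ℕ) + 1 ∈ T
      · simp only [if_pos h1, if_pos h2]
        norm_num
      · simp only [if_pos h1, if_neg h2]
        norm_num
      · simp only [if_neg h1, if_pos h2]
        have he : γ * ((((1 : ℕ) + 1 : ℕ)) : ℝ) = γ + γ := by push_cast; ring
        rw [he, Real.rpow_add' (abs_nonneg _) (by positivity)]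
      · simp only [if_neg h1, if_neg h2]
        norm_num
    rw [hRT, Finset.prod_mul_distrib]
    have hfst : (∏ i ∈ Finset.range n, (if i ∈ T then 1 else |x i| ^ γ)) =
        ∏ i ∈ Finset.range n \ T, |x i| ^ γ := by
      rw [Finset.sdiff_eq_filter, Finset.prod_filter]
      refine Finset.prod_congr rfl (fun i _ => ?_)
      by_cases h : i ∈ T <;> simp [h]
    have hinj2 : Set.InjOn (· - 1) (T : Set ℕ) := by
      intro a ha b hb hab
      simp only [Finset.mem_coe] at ha hb
      have := hTsub a ha; have := hTsub b hb
      simp only at hab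
      omega
    have hsnd : (∏ i ∈ Finset.range n, (if i + 1 ∈ T then |x i| ^ γ else 1)) =
        ∏ t ∈ T, pv t := by
      rw [← Finset.prod_filter, filter_succ_eq hT,
        Finset.prod_image (fun a ha b hb hab =>
          hinj2 (by simpa using ha) (by simpa using hb) hab)]
      refine Finset.prod_congr rfl (fun t ht => ?_)
      have h := hTsub t ht
      simp only [hpv]
      rw [if_neg (by omega : ¬ t = 0)]
    rw [hfst, hsnd]
    simp only [hg]
    ring
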